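/- Restricting φ₃ along x₂ = x₃ = y gives φ₃(x,y,y) = (x-y)^{p-2}, and the restriction of l₁(φ₃) gives l₁(φ₃)(x,y,y) = (p-2)(x+y)(x-y)^{p-2}, where l₁ = ∑_j x_j² ∂/∂x_j. -/

import Mathlib

open MvPolynomial

/-- The Pochhammer symbol (rising factorial) (x)ₙ over ℚ. -/
def pochQ (x : ℚ) : ℕ → ℚ
  | 0 => 1
  | n + 1 => pochQ x n * (x + n)

/-- φ₃(x₁,x₂,x₃) = (x₁-x₂)^{p-2} F(1-p/3, 2-p, 2-2p/3; (x₃-x₂)/(x₁-x₂)), expanded as a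
polynomial in the three variables. -/
noncomputable def phi3 (p : ℕ) : MvPolynomial (Fin 3) ℚ :=
  ∑ n ∈ Finset.range (p - 1),
    C (pochQ (1 - p / 3) n * pochQ (2 - p) n /
        (pochQ (2 - 2 * p / 3) n * (n.factorial : ℚ)))
      * (X 0 - X 1) ^ (p - 2 - n) * (X 2 - X 1) ^ n

/-- The derivation l₁ = ∑ⱼ xⱼ² ∂/∂xⱼ. -/
noncomputable def l1 (f : MvPolynomial (Fin 3) ℚ) : MvPolynomial (Fin 3) ℚ :=
  ∑ j : Fin 3, X j ^ 2 * pderiv j f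

private lemma sum01 {M : Type*} [AddCommMonoid M] (g : ℕ → M) (m : ℕ) (hm : 2 ≤ m)
    (hz : ∀ n, 2 ≤ n → g n = 0) : ∑ n ∈ Finset.range m, g n = g 0 + g 1 := by
  have h : ∑ n ∈ Finset.range m, g n = ∑ n ∈ Finset.range 2, g n := by
    refine (Finset.sum_subset (Finset.range_subset_range.2 hm) ?_).symm
    intro x _ hx
    exact hz x (by simp at hx; omega)
  rw [h]
  simp [Finset.sum_range_succ]

/-- restricting along x₂ = x₃ = y gives φ₃(x,y,y) = (x-y)^{p-2} and
l₁(φ₃)(x,y,y) = (p-2)(x+y)(x-y)^{p-2}. -/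
theorem stmt10 (p : ℕ) (hp : 4 ≤ p) (h3 : ¬ (3 ∣ p)) :
    aeval (![X 0, X 1, X 1] : Fin 3 → MvPolynomial (Fin 2) ℚ) (phi3 p)
        = (X 0 - X 1) ^ (p - 2) ∧
    aeval (![X 0, X 1, X 1] : Fin 3 → MvPolynomial (Fin 2) ℚ) (l1 (phi3 p))
        = C ((p : ℚ) - 2) * (X 0 + X 1) * (X 0 - X 1) ^ (p - 2) := by
  set σ : Fin 3 → MvPolynomial (Fin 2) ℚ := ![X 0, X 1, X 1] with hσ
  set c : ℕ → ℚ := fun n => pochQ (1 - p / 3) n * pochQ (2 - p) n /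
        (pochQ (2 - 2 * p / 3) n * (n.factorial : ℚ)) with hc
  have hc0 : c 0 = 1 := by simp [hc, pochQ]
  have hσ0 : σ 0 = X 0 := rfl
  have hσ1 : σ 1 = X 1 := rfl
  have hσ2 : σ 2 = X 1 := rfl
  have hA : aeval σ (X 0 - X 1 : MvPolynomial (Fin 3) ℚ) = X 0 - X 1 := by
    simp [hσ0, hσ1]
  have hB : aeval σ (X 2 - X 1 : MvPolynomial (Fin 3) ℚ) = 0 := by
    simp [hσ1, hσ2]
  constructor
  · rw [phi3, map_sum]
    rw [Finset.sum_eq_single 0]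
    · simp only [map_mul, map_pow, hA, hB, aeval_C, hc0, pow_zero, mul_one]
      simp [hc0, pochQ]
    · intro n _ hn
      simp only [map_mul, map_pow, hB, zero_pow hn, mul_zero]
    · intro h
      exact absurd (Finset.mem_range.2 (by omega)) h
  · have hp3 : p - 3 + 1 = p - 2 := by omega
    -- closed forms for the restricted partial derivatives
    have key : ∀ j : Fin 3, ∀ n : ℕ,
        aeval σ (pderiv j (C (c n) * (X 0 - X 1) ^ (p - 2 - n) * (X 2 - X 1) ^ n))
          = C (c n) * (((p - 2 - n : ℕ) : MvPolynomial (Fin 2) ℚ)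
              * (X 0 - X 1) ^ (p - 2 - n - 1) * (aeval σ (pderiv j (X 0 - X 1 : MvPolynomial (Fin 3) ℚ))) * 0 ^ n
            + (X 0 - X 1) ^ (p - 2 - n) * ((n : MvPolynomial (Fin 2) ℚ) * 0 ^ (n - 1)
              * (aeval σ (pderiv j (X 2 - X 1 : MvPolynomial (Fin 3) ℚ))))) := by
      intro j n
      rw [pderiv_mul, pderiv_mul, pderiv_C, pderiv_pow, pderiv_pow]
      simp only [map_add, map_mul, map_pow, map_natCast, aeval_C, hA, hB, zero_mul, add_zero,
        mul_zero, zero_add, MvPolynomial.algebraMap_eq]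
      ring
    have hpc : ((p - 2 : ℕ) : MvPolynomial (Fin 2) ℚ) = C ((p : ℚ) - 2) := by
      have : ((p - 2 : ℕ) : ℚ) = (p : ℚ) - 2 := by
        push_cast [Nat.cast_sub (by omega : 2 ≤ p)]; ring
      rw [← C_eq_coe_nat, this]
    have e00 : aeval σ (pderiv 0 (X 0 - X 1 : MvPolynomial (Fin 3) ℚ)) = 1 := by
      simp [pderiv_X, Pi.single_apply]
    have e01 : aeval σ (pderiv 0 (X 2 - X 1 : MvPolynomial (Fin 3) ℚ)) = 0 := by
      simp [pderiv_X, Pi.single_apply]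
    have e10 : aeval σ (pderiv 1 (X 0 - X 1 : MvPolynomial (Fin 3) ℚ)) = -1 := by
      simp [pderiv_X, Pi.single_apply]
    have e11 : aeval σ (pderiv 1 (X 2 - X 1 : MvPolynomial (Fin 3) ℚ)) = -1 := by
      simp [pderiv_X, Pi.single_apply]
    have e20 : aeval σ (pderiv 2 (X 0 - X 1 : MvPolynomial (Fin 3) ℚ)) = 0 := by
      simp [pderiv_X, Pi.single_apply]
    have e21 : aeval σ (pderiv 2 (X 2 - X 1 : MvPolynomial (Fin 3) ℚ)) = 1 := by
      simp [pderiv_X, Pi.single_apply]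
    have hD0 : aeval σ (pderiv 0 (phi3 p)) = C ((p : ℚ) - 2) * (X 0 - X 1) ^ (p - 3) := by
      rw [phi3, map_sum, map_sum]
      rw [Finset.sum_congr rfl (fun n _ => key 0 n)]
      rw [sum01 _ _ (by omega) (fun n hn => by
        rw [e00, e01]
        rw [zero_pow (by omega : n ≠ 0), zero_pow (by omega : n - 1 ≠ 0)]
        ring)]
      rw [e00, e01, hc0]
      have h1 : p - 2 - 1 = p - 3 := by omega
      simp [h1, hpc]
    have hD1 : aeval σ (pderiv 1 (phi3 p))
        = -(C ((p : ℚ) - 2) * (X 0 - X 1) ^ (p - 3)) - C (c 1) * (X 0 - X 1) ^ (p - 3) := by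
      rw [phi3, map_sum, map_sum]
      rw [Finset.sum_congr rfl (fun n _ => key 1 n)]
      rw [sum01 _ _ (by omega) (fun n hn => by
        rw [e10, e11]
        rw [zero_pow (by omega : n ≠ 0), zero_pow (by omega : n - 1 ≠ 0)]
        ring)]
      rw [e10, e11, hc0]
      have h1 : p - 2 - 1 = p - 3 := by omega
      simp [h1, hpc]
      ring
    have hD2 : aeval σ (pderiv 2 (phi3 p)) = C (c 1) * (X 0 - X 1) ^ (p - 3) := by
      rw [phi3, map_sum, map_sum]
      rw [Finset.sum_congr rfl (fun n _ => key 2 n)]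
      rw [sum01 _ _ (by omega) (fun n hn => by
        rw [e20, e21]
        rw [zero_pow (by omega : n ≠ 0), zero_pow (by omega : n - 1 ≠ 0)]
        ring)]
      rw [e20, e21, hc0]
      have h1 : p - 2 - 1 = p - 3 := by omega
      simp [h1, hpc]
    rw [l1, map_sum, Fin.sum_univ_three]
    simp only [map_mul, map_pow, aeval_X, hσ0, hσ1, hσ2, hD0, hD1, hD2]
    rw [show (X 0 - X 1 : MvPolynomial (Fin 2) ℚ) ^ (p - 2)
        = (X 0 - X 1) ^ (p - 3) * (X 0 - X 1) by rw [← pow_succ, hp3]]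
    ring
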